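/- arXiv:2008.08541 — 3 statements merged into one kernel-verified Lean document; each statement's English description precedes it below -/
import Mathlib

section
/- For every finite simple graph G, the all-ones configuration is solvable: there exists a pattern p ∈ GF(2)^n with N(G)p = 1 (the all-ones vector). -/
open scoped Classical

/-- Closed adjacency matrix of a simple graph over GF(2): entry (i,j) is 1 iff i = j or i ~ j. -/
noncomputable def closedAdj {V : Type*} [Fintype V] (G : SimpleGraph V) :
    Matrix V V (ZMod 2) :=
  Matrix.of fun i j => if i = j ∨ G.Adj i j then 1 else 0

/-- Nullity ν(G): dimension over GF(2) of the kernel of the closed adjacency matrix. -/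
noncomputable def nu {V : Type*} [Fintype V] (G : SimpleGraph V) : ℕ :=
  Module.finrank (ZMod 2) (LinearMap.ker (closedAdj G).mulVecLin)

/-! Over GF(2), `c ⬝ᵥ N c = ∑ N_ii c_i² = ∑ c_i = c ⬝ᵥ 1` for symmetric `N` with unit diagonal,
because the off-diagonal terms cancel in pairs. If `1` were not in the range of `N`, some `c`
would be orthogonal to the range but not to `1`; applied to `N c` this contradicts the identity
above. -/

open Matrix

namespace Matrix

variable {n R : Type*} [Fintype n]

theorem exists_dotProduct_mulVec_eq_zero_of_notMem_range {m K : Type*} [Fintype m]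
    [DecidableEq m] [Field K] {A : Matrix m n K} {v : m → K}
    (hv : v ∉ LinearMap.range A.mulVecLin) :
    ∃ c : m → K, (∀ x, c ⬝ᵥ A *ᵥ x = 0) ∧ c ⬝ᵥ v ≠ 0 := by
  obtain ⟨f, hfv, hf⟩ := Submodule.exists_dual_map_eq_bot_of_notMem hv inferInstance
  refine ⟨(dotProductEquiv K m).symm f, fun x ↦ ?_, ?_⟩
  · rw [← dotProductEquiv_apply_apply, LinearEquiv.apply_symm_apply]
    exact (Submodule.mem_bot K).mp (hf ▸ Submodule.mem_map_of_mem ⟨x, rfl⟩)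
  · rwa [← dotProductEquiv_apply_apply, LinearEquiv.apply_symm_apply]

variable [CommRing R] [CharP R 2] {A : Matrix n n R}

theorem IsSymm.dotProduct_mulVec_add_self (hA : A.IsSymm) (a b : n → R) :
    (a + b) ⬝ᵥ A *ᵥ (a + b) = a ⬝ᵥ A *ᵥ a + b ⬝ᵥ A *ᵥ b := by
  have hcross : b ⬝ᵥ A *ᵥ a = a ⬝ᵥ A *ᵥ b := by
    rw [dotProduct_mulVec, dotProduct_comm, ← mulVec_transpose, hA.eq]
  rw [mulVec_add, add_dotProduct, dotProduct_add, dotProduct_add, hcross]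
  linear_combination CharTwo.add_self_eq_zero (a ⬝ᵥ A *ᵥ b)

theorem IsSymm.dotProduct_mulVec_self_eq_sum_diag [DecidableEq n] (hA : A.IsSymm) (c : n → R) :
    c ⬝ᵥ A *ᵥ c = ∑ i, A i i * c i ^ 2 := by
  let Q : (n → R) →+ R :=
    AddMonoidHom.mk' (fun x ↦ x ⬝ᵥ A *ᵥ x) hA.dotProduct_mulVec_add_self
  calc c ⬝ᵥ A *ᵥ c = Q (∑ i, Pi.single i (c i)) := by rw [Finset.univ_sum_single]; rfl
    _ = ∑ i, A i i * c i ^ 2 := by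
      rw [map_sum]
      refine Finset.sum_congr rfl fun i _ ↦ ?_
      simp only [AddMonoidHom.mk'_apply, mulVec_single, op_smul_eq_smul, dotProduct_smul,
        single_dotProduct, col_apply, smul_eq_mul, Q]
      ring

end Matrix

theorem closedAdj_isSymm {V : Type*} [Fintype V] (G : SimpleGraph V) : (closedAdj G).IsSymm :=
  IsSymm.ext fun i j ↦ by simp [closedAdj, eq_comm, G.adj_comm]

@[simp]
theorem closedAdj_apply_self {V : Type*} [Fintype V] (G : SimpleGraph V) (i : V) :
    closedAdj G i i = 1 := by
  simp [closedAdj]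

theorem all_ones_solvable {V : Type*} [Fintype V] (G : SimpleGraph V) :
    ∃ p : V → ZMod 2, (closedAdj G).mulVec p = 1 := by
  by_contra! h
  obtain ⟨c, hc, hc1⟩ := exists_dotProduct_mulVec_eq_zero_of_notMem_range
    (A := closedAdj G) (v := 1) fun ⟨p, hp⟩ ↦ h p hp
  have hquad : c ⬝ᵥ closedAdj G *ᵥ c = c ⬝ᵥ 1 := by
    rw [(closedAdj_isSymm G).dotProduct_mulVec_self_eq_sum_diag]
    simp [ZMod.pow_card, dotProduct]
  exact hc1 (hquad ▸ hc c)
end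

section
/- Let G be an always solvable finite simple graph on n ≥ 1 vertices. Then there exists a chain of induced subgraphs G = G_0 ⊃ G_1 ⊃ ⋯ ⊃ G_{n−1} where each G_k is always solvable, |V(G_k)| = n − k, and each G_{k+1} is obtained from G_k by deleting a single vertex. -/
open scoped Classical

/-!
The inverse `B` of the closed adjacency matrix `A` of an always solvable graph is symmetric, so
over GF(2) its quadratic form is linear: `yᵀ B y = ∑ B_ii y_i`. At `y = A e_v` this form equals
`A_vv = 1`, hence some diagonal entry `B_vv` is nonzero. Since `det A · B_vv` is the principal
minor of `A` at `v`, deleting `v` keeps the graph always solvable, and iterating from the whole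
vertex set produces the chain.
-/

open Matrix

theorem Finset.sum_sum_eq_sum_diag_of_charTwo {ι R : Type*} [CommRing R] [CharP R 2]
    (f : ι → ι → R) (hf : ∀ i j, f i j = f j i) (s : Finset ι) :
    ∑ i ∈ s, ∑ j ∈ s, f i j = ∑ i ∈ s, f i i := by
  induction s using Finset.cons_induction with
  | empty => simp
  | cons a s ha ih =>
    simp only [Finset.sum_cons, Finset.sum_add_distrib, ih, hf _ a]
    rw [add_assoc, ← add_assoc (∑ j ∈ s, f a j), CharTwo.add_self_eq_zero, zero_add]

theorem Matrix.IsSymm.dotProduct_mulVec_self_of_charTwo {n R : Type*} [Fintype n] [CommRing R]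
    [CharP R 2] {B : Matrix n n R} (hB : B.IsSymm) (x : n → R) :
    x ⬝ᵥ (B *ᵥ x) = ∑ i, B i i * x i ^ 2 := by
  simp only [dotProduct, mulVec, Finset.mul_sum]
  rw [Finset.sum_sum_eq_sum_diag_of_charTwo]
  · exact Finset.sum_congr rfl fun i _ => by ring
  · intro i j
    rw [← hB.apply i j]
    ring

theorem Matrix.exists_inv_apply_self_ne_zero {n : Type*} [Fintype n] [DecidableEq n]
    [Nonempty n] {A : Matrix n n (ZMod 2)} (hA : IsUnit A) (hsymm : A.IsSymm)
    (hdiag : ∀ i, A i i = 1) : ∃ v, A⁻¹ v v ≠ 0 := by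
  by_contra! hzero
  obtain ⟨v⟩ := ‹Nonempty n›
  set y := A *ᵥ Pi.single v 1
  have hy : A⁻¹ *ᵥ y = Pi.single v 1 := by
    rw [mulVec_mulVec, nonsing_inv_mul A ((isUnit_iff_isUnit_det A).mp hA), one_mulVec]
  have : (1 : ZMod 2) = 0 := calc
    1 = y v := by simp [y, hdiag]
    _ = y ⬝ᵥ (A⁻¹ *ᵥ y) := by rw [hy, dotProduct_single_one]
    _ = 0 := by simp [hsymm.inv.dotProduct_mulVec_self_of_charTwo, hzero]
  exact one_ne_zero this

theorem Matrix.isUnit_submatrix_ne_of_inv_apply_self_ne_zero {n K : Type*} [Fintype n]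
    [DecidableEq n] [Field K] {A : Matrix n n K} (hA : IsUnit A) {v : n} (hv : A⁻¹ v v ≠ 0) :
    IsUnit (A.submatrix (Subtype.val : {i // i ≠ v} → n) (Subtype.val : {i // i ≠ v} → n)) := by
  refine (isUnit_iff_isUnit_det _).mpr (isUnit_iff_ne_zero.mpr fun hdet => ?_)
  obtain ⟨x, hx0, hx⟩ := exists_mulVec_eq_zero_iff.mpr hdet
  set y : n → K := fun i => if h : i = v then 0 else x ⟨i, h⟩
  set c := (A *ᵥ y) v
  have hAy : A *ᵥ y = Pi.single v c := by
    funext i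
    by_cases h : i = v
    · subst h; simp [c]
    rw [Pi.single_eq_of_ne h, ← Pi.zero_apply (M := fun _ : {i // i ≠ v} => K) ⟨i, h⟩, ← hx]
    simp only [mulVec, dotProduct, Fintype.sum_eq_add_sum_subtype_ne _ v, y, dite_true, mul_zero,
      zero_add, submatrix_apply]
    exact Finset.sum_congr rfl fun j _ => by rw [dif_neg j.2]
  have hy : y = A⁻¹ *ᵥ Pi.single v c := by
    rw [← hAy, mulVec_mulVec, nonsing_inv_mul A ((isUnit_iff_isUnit_det A).mp hA), one_mulVec]
  have hc : c = 0 := by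
    have hyv := congrFun hy v
    simp only [mulVec_single, y, dite_true] at hyv
    exact (mul_eq_zero.mp hyv.symm).resolve_left hv
  refine hx0 (funext fun i => ?_)
  simpa [y, i.2, hc] using congrFun hy i

theorem exists_chain_of_forall_exists_diff_singleton {V : Type*} [Fintype V]
    (P : Set V → Prop) (huniv : P Set.univ)
    (hstep : ∀ S : Set V, S.Nonempty → P S → ∃ v ∈ S, P (S \ {v})) :
    ∃ S : ℕ → Set V,
      S 0 = Set.univ ∧
      (∀ k, k < Fintype.card V → Nat.card (S k) = Fintype.card V - k ∧ P (S k)) ∧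
      (∀ k, k + 1 < Fintype.card V → ∃ v ∈ S k, S (k + 1) = S k \ {v}) := by
  cases isEmpty_or_nonempty V
  · exact ⟨fun _ => Set.univ, rfl, by simp, by simp⟩
  choose! f hf_mem hf_P using hstep
  set S : ℕ → Set V := fun k => (fun T => T \ {f T})^[k] Set.univ
  have hS_succ (k : ℕ) : S (k + 1) = S k \ {f (S k)} := Function.iterate_succ_apply' ..
  have nonempty_of_card {T : Set V} {k : ℕ} (hT : Nat.card T = Fintype.card V - k)
      (hk : k < Fintype.card V) : T.Nonempty :=
    Set.nonempty_of_ncard_ne_zero (by rw [← Nat.card_coe_set_eq, hT]; omega)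
  have hchain : ∀ k, k < Fintype.card V → Nat.card (S k) = Fintype.card V - k ∧ P (S k) := by
    intro k
    induction k with
    | zero => exact fun _ => ⟨by simp [S], huniv⟩
    | succ k ih =>
      intro hk
      obtain ⟨hcard, hP⟩ := ih (by omega)
      have hne := nonempty_of_card hcard (by omega)
      rw [hS_succ, Nat.card_coe_set_eq, Set.ncard_sdiff_singleton_of_mem (hf_mem _ hne hP),
        ← Nat.card_coe_set_eq, hcard]
      exact ⟨by omega, hf_P _ hne hP⟩
  refine ⟨S, rfl, hchain, fun k hk => ?_⟩
  obtain ⟨hcard, hP⟩ := hchain k (by omega)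
  exact ⟨f (S k), hf_mem _ (nonempty_of_card hcard (by omega)) hP, hS_succ k⟩

namespace SimpleGraph

variable {V : Type*} [Fintype V] (G : SimpleGraph V)

theorem closedAdj_isSymm : (closedAdj G).IsSymm := by
  ext i j
  simp only [closedAdj, transpose_apply, of_apply, eq_comm, G.adj_comm]

theorem closedAdj_apply_self (i : V) : closedAdj G i i = 1 := by
  simp [closedAdj]

theorem closedAdj_induce (S : Set V) [Fintype S] :
    closedAdj (G.induce S) = (closedAdj G).submatrix (↑) (↑) := by
  ext i j
  simp [closedAdj, Subtype.ext_iff]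

theorem exists_isUnit_closedAdj_induce_diff_singleton {S : Set V} (hS : S.Nonempty)
    (h : IsUnit (closedAdj (G.induce S))) :
    ∃ v ∈ S, IsUnit (closedAdj (G.induce (S \ {v}))) := by
  have : Nonempty S := hS.to_subtype
  obtain ⟨v, hv⟩ := exists_inv_apply_self_ne_zero h (G.induce S).closedAdj_isSymm
    (G.induce S).closedAdj_apply_self
  refine ⟨v, v.2, ?_⟩
  let e : ↥(S \ {(v : V)}) ≃ {i : S // i ≠ v} :=
    { toFun x := ⟨⟨x, x.2.1⟩, fun h => x.2.2 (congrArg Subtype.val h)⟩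
      invFun y := ⟨y.1, y.1.2, fun h => y.2 (Subtype.ext h)⟩ }
  have hminor : closedAdj (G.induce (S \ {(v : V)})) =
      (closedAdj (G.induce S)).submatrix (Subtype.val ∘ e) (Subtype.val ∘ e) := by
    rw [closedAdj_induce, closedAdj_induce]
    rfl
  rw [hminor, ← submatrix_submatrix, isUnit_submatrix_equiv]
  exact isUnit_submatrix_ne_of_inv_apply_self_ne_zero h hv

end SimpleGraph

theorem exists_always_solvable_chain_general {V : Type*} [Fintype V]
    (G : SimpleGraph V) (hG : IsUnit (closedAdj G)) :
    ∃ S : ℕ → Set V,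
      S 0 = Set.univ ∧
      (∀ k, k < Fintype.card V →
        Nat.card (S k) = Fintype.card V - k ∧ IsUnit (closedAdj (G.induce (S k)))) ∧
      (∀ k, k + 1 < Fintype.card V → ∃ v ∈ S k, S (k + 1) = S k \ {v}) := by
  refine exists_chain_of_forall_exists_diff_singleton (fun S => IsUnit (closedAdj (G.induce S)))
    ?_ fun S hS hS_unit => ?_
  · simp only [G.closedAdj_induce]
    convert (isUnit_submatrix_equiv (Equiv.Set.univ V) (Equiv.Set.univ V)).mpr hG using 3 <;> rfl
  · obtain ⟨v, hv, hv_unit⟩ := G.exists_isUnit_closedAdj_induce_diff_singleton hS hS_unit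
    -- `convert` reconciles the two `Fintype` instances on `↥(S \ {v})`
    exact ⟨v, hv, by convert hv_unit⟩

theorem exists_always_solvable_chain {V : Type*} [Fintype V] [Nonempty V]
    (G : SimpleGraph V) (hG : IsUnit (closedAdj G)) :
    ∃ S : ℕ → Set V,
      S 0 = Set.univ ∧
      (∀ k, k < Fintype.card V →
        Nat.card (S k) = Fintype.card V - k ∧ IsUnit (closedAdj (G.induce (S k)))) ∧
      (∀ k, k + 1 < Fintype.card V → ∃ v ∈ S k, S (k + 1) = S k \ {v}) :=
  exists_always_solvable_chain_general G hG
end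

section
/- Let u be a half-activated vertex of a finite simple graph G. Then there exists a half-activated vertex w adjacent to u. (In particular, if some null pattern ℓ satisfies ℓ(u) = 1, then ℓ activates an odd number of neighbors of u.) -/
open scoped Classical

/-!
Row `u` of `N ℓ = 0` reads `ℓ u + ∑_{w ~ u} ℓ w = 0`, i.e. over GF(2) the values of `ℓ` on the
neighbours of `u` sum to `ℓ u`. If `ℓ u = 1` this sum is nonzero, so some neighbour `w` has
`ℓ w = 1`, and `ℓ` itself witnesses that `w` is half-activated.
-/

theorem closedAdj_mulVec_apply {V : Type*} [Fintype V] (G : SimpleGraph V) (l : V → ZMod 2)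
    (u : V) : (closedAdj G).mulVec l u = l u + ∑ w ∈ G.neighborFinset u, l w := by
  have hsplit : ∀ j, closedAdj G u j * l j =
      (if u = j then l j else 0) + if G.Adj u j then l j else 0 := by
    intro j
    by_cases huj : u = j
    · subst huj; simp [closedAdj]
    · by_cases hadj : G.Adj u j <;> simp [closedAdj, huj, hadj]
  simp only [Matrix.mulVec, dotProduct, hsplit, Finset.sum_add_distrib, Finset.sum_ite_eq,
    Finset.mem_univ, if_true, ← Finset.sum_filter]
  congr 2
  ext w
  simp

theorem sum_neighborFinset_eq_of_mulVec_closedAdj_eq_zero {V : Type*} [Fintype V]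
    (G : SimpleGraph V) {l : V → ZMod 2} (hl : (closedAdj G).mulVec l = 0) (u : V) :
    ∑ w ∈ G.neighborFinset u, l w = l u := by
  have hrow := congrFun hl u
  rw [closedAdj_mulVec_apply, Pi.zero_apply, add_eq_zero_iff_eq_neg'] at hrow
  rw [hrow, ZMod.neg_eq_self_mod_two]

theorem exists_adj_apply_eq_one_of_mulVec_closedAdj_eq_zero {V : Type*} [Fintype V]
    (G : SimpleGraph V) {l : V → ZMod 2} (hl : (closedAdj G).mulVec l = 0) {u : V}
    (hu : l u = 1) : ∃ w, G.Adj u w ∧ l w = 1 := by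
  have hsum : ∑ w ∈ G.neighborFinset u, l w ≠ 0 := by
    rw [sum_neighborFinset_eq_of_mulVec_closedAdj_eq_zero G hl, hu]
    exact one_ne_zero
  obtain ⟨w, hw, hlw⟩ := Finset.exists_ne_zero_of_sum_ne_zero hsum
  exact ⟨w, (G.mem_neighborFinset u w).mp hw, (by decide : ∀ x : ZMod 2, x ≠ 0 → x = 1) _ hlw⟩

theorem half_activated_has_half_activated_neighbor {V : Type*} [Fintype V]
    (G : SimpleGraph V) (u : V)
    (hu : ∃ l : V → ZMod 2, (closedAdj G).mulVec l = 0 ∧ l u = 1) :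
    ∃ w : V, G.Adj u w ∧ ∃ l : V → ZMod 2, (closedAdj G).mulVec l = 0 ∧ l w = 1 := by
  obtain ⟨l, hl, hlu⟩ := hu
  obtain ⟨w, huw, hlw⟩ := exists_adj_apply_eq_one_of_mulVec_closedAdj_eq_zero G hl hlu
  exact ⟨w, huw, l, hl, hlw⟩
end
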